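/- The Fréchet differential DS_L : 𝒪 → H* is Lipschitz continuous on every bounded convex subset of 𝒪; more precisely, for every bounded convex set B ⊆ 𝒪 there is a constant C (depending only on ℓ₁, n and a bound for B) such that ‖DS_L(γ₁) − DS_L(γ₂)‖_{H*} ≤ C ‖γ₁ − γ₂‖_H for all γ₁, γ₂ ∈ B. -/

import Mathlib

open MeasureTheory Set Filter Topology ContDiff
open scoped RealInnerProductSpace

noncomputable section

/-- Euclidean space `ℝ^n`. -/
abbrev E (n : ℕ) : Type := EuclideanSpace ℝ (Fin n)

/-- Lebesgue measure restricted to the interval `[0,1]`. -/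
abbrev μ01 : Measure ℝ := volume.restrict (Set.Icc (0:ℝ) 1)

instance : IsFiniteMeasure μ01 :=
  ⟨by rw [Measure.restrict_apply_univ]; simp [Real.volume_Icc]⟩

/-- The Hilbert space `H = ℝ^n × L²([0,1],ℝ^n)`, the standard model of `H¹([0,1],ℝ^n)`
via `u ↦ (u 0, u')`. -/
abbrev Hsp (n : ℕ) : Type := E n × Lp (E n) 2 μ01

variable {n : ℕ}

/-- The absolutely continuous path associated to `(x,w) ∈ H`:  `t ↦ x + ∫_0^t w(s) ds`. -/
def pathH (p : Hsp n) : ℝ → E n :=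
  fun t => p.1 + ∫ s in Set.Ioc (0:ℝ) t, p.2 s ∂μ01

/-- The open set `𝒪 ⊆ H` of those `(x,w)` whose path stays in `U`. -/
def actO (U : Set (E n)) : Set (Hsp n) :=
  {p | ∀ t ∈ Set.Icc (0:ℝ) 1, pathH p t ∈ U}

/-- The Lagrangian action functional `S_L`. -/
def action (L : ℝ → E n → E n → ℝ) (p : Hsp n) : ℝ :=
  ∫ t, L t (pathH p t) (p.2 t) ∂μ01

/-- The first differential of the action functional:
`DS_L(p)[ξ] = ∫_0^1 ( ∂L/∂q · ξ + ∂L/∂v · ξ' ) dt`. -/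
def dAct (Lq Lv : ℝ → E n → E n → E n) (p ξ : Hsp n) : ℝ :=
  ∫ t, (⟪Lq t (pathH p t) (p.2 t), pathH ξ t⟫ + ⟪Lv t (pathH p t) (p.2 t), ξ.2 t⟫) ∂μ01

/-- The second Gateaux differential of the action functional:
`d²S_L(p)[ξ,η] = ∫_0^1 ( ∂²L/∂v² ξ'·η' + ∂²L/∂v∂q ξ'·η + ∂²L/∂q∂v ξ·η' + ∂²L/∂q² ξ·η ) dt`. -/
def d2Act (Lvv Lqv Lqq : ℝ → E n → E n → (E n →L[ℝ] E n)) (p ξ η : Hsp n) : ℝ :=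
  ∫ t, (⟪Lvv t (pathH p t) (p.2 t) (ξ.2 t), η.2 t⟫
      + ⟪Lqv t (pathH p t) (p.2 t) (pathH ξ t), η.2 t⟫
      + ⟪Lqv t (pathH p t) (p.2 t) (pathH η t), ξ.2 t⟫
      + ⟪Lqq t (pathH p t) (p.2 t) (pathH ξ t), pathH η t⟫) ∂μ01

/-- The `H`-inner product `⟨(x,w),(y,z)⟩ = x·y + ⟨w,z⟩_{L²}`. -/
def innH (p q : Hsp n) : ℝ := ⟪p.1, q.1⟫ + ⟪p.2, q.2⟫

lemma pathH_add (p q : Hsp n) (t : ℝ) (_ht : t ∈ Set.Icc (0:ℝ) 1) :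
    pathH (p + q) t = pathH p t + pathH q t := by
  have hint : ∀ r : Hsp n, Integrable (r.2 : ℝ → E n) (μ01.restrict (Set.Ioc (0:ℝ) t)) :=
    fun r => ((Lp.memLp r.2).integrable (by norm_num)).restrict
  have h1 : (((p + q).2 : Lp (E n) 2 μ01) : ℝ → E n)
      =ᵐ[μ01.restrict (Set.Ioc (0:ℝ) t)] fun s => p.2 s + q.2 s :=
    ae_restrict_of_ae (Lp.coeFn_add p.2 q.2)
  have h2 : ∫ s in Set.Ioc (0:ℝ) t, (p + q).2 s ∂μ01
      = (∫ s in Set.Ioc (0:ℝ) t, p.2 s ∂μ01) + ∫ s in Set.Ioc (0:ℝ) t, q.2 s ∂μ01 := by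
    rw [integral_congr_ae h1]
    exact integral_add (hint p) (hint q)
  simp only [pathH, Prod.fst_add, h2]
  abel

lemma pathH_smul (c : ℝ) (p : Hsp n) (t : ℝ) (_ht : t ∈ Set.Icc (0:ℝ) 1) :
    pathH (c • p) t = c • pathH p t := by
  have h1 : (((c • p).2 : Lp (E n) 2 μ01) : ℝ → E n)
      =ᵐ[μ01.restrict (Set.Ioc (0:ℝ) t)] fun s => c • (p.2 s) :=
    ae_restrict_of_ae (Lp.coeFn_smul c p.2)
  have h2 : ∫ s in Set.Ioc (0:ℝ) t, (c • p).2 s ∂μ01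
      = c • ∫ s in Set.Ioc (0:ℝ) t, p.2 s ∂μ01 := by
    rw [integral_congr_ae h1]
    exact integral_smul c _
  simp only [pathH, Prod.smul_fst, h2, smul_add]

lemma pathH_zero (t : ℝ) (_ht : t ∈ Set.Icc (0:ℝ) 1) : pathH (0 : Hsp n) t = 0 := by
  have h1 : (((0 : Hsp n).2 : Lp (E n) 2 μ01) : ℝ → E n)
      =ᵐ[μ01.restrict (Set.Ioc (0:ℝ) t)] fun _ => (0 : E n) :=
    ae_restrict_of_ae (Lp.coeFn_zero (E n) 2 μ01)
  simp only [pathH]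
  rw [integral_congr_ae h1]
  simp

/-- The closed subspace `H_W = {(x,w) : (γ(0),γ(1)) ∈ W}` of `H`. -/
def HWsub (W : Submodule ℝ (E n × E n)) : Submodule ℝ (Hsp n) where
  carrier := {p | (pathH p 0, pathH p 1) ∈ W}
  add_mem' := by
    intro p q hp hq
    simp only [Set.mem_setOf_eq] at *
    rw [pathH_add p q 0 (by norm_num), pathH_add p q 1 (by norm_num)]
    exact W.add_mem hp hq
  zero_mem' := by
    simp only [Set.mem_setOf_eq]
    rw [pathH_zero 0 (by norm_num), pathH_zero 1 (by norm_num)]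
    exact W.zero_mem
  smul_mem' := by
    intro c p hp
    simp only [Set.mem_setOf_eq] at *
    rw [pathH_smul c p 0 (by norm_num), pathH_smul c p 1 (by norm_num)]
    exact W.smul_mem c hp

/-- The auxiliary inner product `⟨ξ,η⟩₀ = ∫ ∂²L/∂v²(t,0,0) ξ'·η' dt + ∫ ξ·η dt` on `H_W`. -/
def inn0 (Lvv : ℝ → E n → E n → (E n →L[ℝ] E n)) (ξ η : Hsp n) : ℝ :=
  (∫ t, ⟪Lvv t 0 0 (ξ.2 t), η.2 t⟫ ∂μ01) + ∫ t, ⟪pathH ξ t, pathH η t⟫ ∂μ01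

end

/-!
At a time `t`, the two configurations `(γ₁(t), γ₁'(t))` and `(γ₂(t), γ₂'(t))` are compared by the
mean value theorem, first in `q` along the segment `[γ₂(t), γ₁(t)]` (which lies in `U` because `B`
is convex) and then in `v`. With `a = 1 + |γ₁'| + |γ₂'|`, the bounds (L1') give
`|∂L/∂q(γ₁) - ∂L/∂q(γ₂)| ≤ ℓ₁ a (a |γ₁ - γ₂| + |γ₁' - γ₂'|)` and
`|∂L/∂v(γ₁) - ∂L/∂v(γ₂)| ≤ ℓ₁ (a |γ₁ - γ₂| + |γ₁' - γ₂'|)`.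
Since `|γ(t)| ≤ 2 ‖γ‖`, the integrand of `DS_L(γ₁)ξ - DS_L(γ₂)ξ` is then at most `ℓ₁ u w` with
`u = 2 ‖γ₁ - γ₂‖ a + |γ₁' - γ₂'|` and `w = 2 ‖ξ‖ a + |ξ'|`, and Cauchy–Schwarz in `L²` bounds
its integral by `ℓ₁ ‖u‖ ‖w‖ ≤ ℓ₁ (3 + 4R)² ‖γ₁ - γ₂‖ ‖ξ‖` when `B` lies in the ball of radius `R`.
-/

namespace MeasureTheory

variable {α F : Type*} [MeasurableSpace α] {μ : Measure α} [NormedAddCommGroup F]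

theorem abs_integral_sub_le_of_abs_sub_le {f₁ f₂ g : α → ℝ}
    (hf₁ : AEStronglyMeasurable f₁ μ) (hf₂ : AEStronglyMeasurable f₂ μ) (hg : Integrable g μ)
    (h : ∀ᵐ x ∂μ, |f₁ x - f₂ x| ≤ g x) :
    |∫ x, f₁ x ∂μ - ∫ x, f₂ x ∂μ| ≤ ∫ x, g x ∂μ := by
  have hsub : Integrable (f₁ - f₂) μ := hg.mono' (hf₁.sub hf₂) h
  -- `f₁` and `f₂` differ by an integrable function: either both are integrable, or both
  -- integrals are the junk value `0`.
  by_cases hi₂ : Integrable f₂ μ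
  · have hi₁ : Integrable f₁ μ := by simpa using hsub.add hi₂
    rw [← integral_sub hi₁ hi₂]
    exact (abs_integral_le_integral_abs).trans (integral_mono_ae hsub.abs hg h)
  · have hi₁ : ¬ Integrable f₁ μ := fun hi₁ => hi₂ (by simpa using hi₁.sub hsub)
    rw [integral_undef hi₁, integral_undef hi₂, sub_zero, abs_zero]
    exact integral_nonneg_of_ae (h.mono fun x hx => (abs_nonneg _).trans hx)

namespace Lp

variable {p : ENNReal}

noncomputable def pointwiseNorm (f : Lp F p μ) : Lp ℝ p μ := (Lp.memLp f).norm.toLp _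

theorem coeFn_pointwiseNorm (f : Lp F p μ) : pointwiseNorm f =ᵐ[μ] fun x => ‖f x‖ :=
  MemLp.coeFn_toLp _

@[simp]
theorem norm_pointwiseNorm (f : Lp F p μ) : ‖pointwiseNorm f‖ = ‖f‖ := by
  rw [pointwiseNorm, Lp.norm_toLp, eLpNorm_norm, Lp.norm_def]

theorem integrable_mul (u w : Lp ℝ 2 μ) : Integrable (fun x => u x * w x) μ := by
  simpa [mul_comm] using L2.integrable_inner (𝕜 := ℝ) u w

theorem integral_mul_le_norm_mul_norm (u w : Lp ℝ 2 μ) :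
    ∫ x, u x * w x ∂μ ≤ ‖u‖ * ‖w‖ := by
  calc ∫ x, u x * w x ∂μ = ⟪u, w⟫ := by simp [L2.inner_def, mul_comm]
    _ ≤ ‖u‖ * ‖w‖ := real_inner_le_norm u w

theorem integral_norm_le_norm [IsProbabilityMeasure μ] (f : Lp F 2 μ) :
    ∫ x, ‖f x‖ ∂μ ≤ ‖f‖ := by
  have h := integral_mul_le_norm_mul_norm (pointwiseNorm f) (Lp.const 2 μ (1 : ℝ))
  rw [Lp.norm_const _ _ _ two_ne_zero, norm_pointwiseNorm] at h
  refine le_of_eq_of_le (integral_congr_ae ?_) (by simpa using h)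
  filter_upwards [coeFn_pointwiseNorm f] with x hx
  simp [hx]

end Lp

end MeasureTheory

theorem continuousOn_of_hasGradientAt_slice {X F : Type*} [NormedAddCommGroup X]
    [NormedSpace ℝ X] [NormedAddCommGroup F] [InnerProductSpace ℝ F] [CompleteSpace F]
    {Φ : X → ℝ} {S : Set X} (hS : IsOpen S) (hΦ : ContDiffOn ℝ 1 Φ S)
    {slice : X → F → X} {π : X → F} {J : F →L[ℝ] X} (hslice : ∀ z, slice z (π z) = z)
    (hJ : ∀ z, HasFDerivAt (slice z) J (π z)) {G : X → F}
    (hG : ∀ z ∈ S, HasGradientAt (fun y => Φ (slice z y)) (G z) (π z)) :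
    ContinuousOn G S := by
  have hG_eq : ∀ z ∈ S, G z = (InnerProductSpace.toDual ℝ F).symm ((fderiv ℝ Φ z).comp J) := by
    intro z hz
    have hΦz : HasFDerivAt Φ (fderiv ℝ Φ z) (slice z (π z)) := by
      rw [hslice]
      exact ((hΦ.differentiableOn one_ne_zero).differentiableAt (hS.mem_nhds hz)).hasFDerivAt
    rw [← (hG z hz).hasFDerivAt.unique (hΦz.comp (π z) (hJ z))]
    simp
  refine ContinuousOn.congr ?_ hG_eq
  exact (InnerProductSpace.toDual ℝ F).symm.continuous.comp_continuousOn
    (((ContinuousLinearMap.compL ℝ F X ℝ).flip J).continuous.comp_continuousOn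
      (hΦ.continuousOn_fderiv_of_isOpen hS le_rfl))

theorem ContinuousOn.aestronglyMeasurable_comp {α β γ : Type*} [MeasurableSpace α]
    {μ : Measure α} [TopologicalSpace β] [MeasurableSpace β] [OpensMeasurableSpace β]
    [NormedAddCommGroup γ] [SecondCountableTopology γ] [MeasurableSpace γ] [BorelSpace γ]
    {g : β → γ} {f : α → β} {s : Set β} (hg : ContinuousOn g s) (hs : IsOpen s)
    (hf : AEMeasurable f μ) (hfs : ∀ᵐ x ∂μ, f x ∈ s) :
    AEStronglyMeasurable (fun x => g (f x)) μ := by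
  classical
  have hm : Measurable (s.piecewise g 0) :=
    hg.measurable_piecewise continuousOn_const hs.measurableSet
  refine (hm.comp_aemeasurable hf).aestronglyMeasurable.congr ?_
  filter_upwards [hfs] with x hx
  simp [hx]

section MeanValue

variable {V V' W : Type*} [NormedAddCommGroup V] [NormedSpace ℝ V] [NormedAddCommGroup V']
  [NormedSpace ℝ V'] [NormedAddCommGroup W] [NormedSpace ℝ W]

theorem norm_le_add_of_mem_segment {v v₁ v₂ : V} (hv : v ∈ segment ℝ v₂ v₁) :
    ‖v‖ ≤ ‖v₁‖ + ‖v₂‖ :=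
  ((convexOn_norm convex_univ).le_max_of_mem_segment trivial trivial hv).trans
    (max_le (by linarith [norm_nonneg v₁]) (by linarith [norm_nonneg v₂]))

theorem norm_sub_le_of_partial_fderiv_le {f : V → V' → W} {fq : V → V →L[ℝ] W}
    {fv : V' → V' →L[ℝ] W} {q₁ q₂ : V} {v₁ v₂ : V'} {Mq Mv : ℝ}
    (hfq : ∀ q ∈ segment ℝ q₂ q₁, HasFDerivAt (fun q' => f q' v₁) (fq q) q)
    (hMq : ∀ q ∈ segment ℝ q₂ q₁, ‖fq q‖ ≤ Mq)
    (hfv : ∀ v ∈ segment ℝ v₂ v₁, HasFDerivAt (f q₂) (fv v) v)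
    (hMv : ∀ v ∈ segment ℝ v₂ v₁, ‖fv v‖ ≤ Mv) :
    ‖f q₁ v₁ - f q₂ v₂‖ ≤ Mq * ‖q₁ - q₂‖ + Mv * ‖v₁ - v₂‖ := by
  have hq := (convex_segment q₂ q₁).norm_image_sub_le_of_norm_hasFDerivWithin_le
    (fun q hq => (hfq q hq).hasFDerivWithinAt) hMq (left_mem_segment ℝ q₂ q₁)
    (right_mem_segment ℝ q₂ q₁)
  have hv := (convex_segment v₂ v₁).norm_image_sub_le_of_norm_hasFDerivWithin_le
    (fun v hv => (hfv v hv).hasFDerivWithinAt) hMv (left_mem_segment ℝ v₂ v₁)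
    (right_mem_segment ℝ v₂ v₁)
  calc ‖f q₁ v₁ - f q₂ v₂‖ ≤ ‖f q₁ v₁ - f q₂ v₁‖ + ‖f q₂ v₁ - f q₂ v₂‖ :=
        norm_sub_le_norm_sub_add_norm_sub _ _ _
    _ ≤ Mq * ‖q₁ - q₂‖ + Mv * ‖v₁ - v₂‖ := add_le_add hq hv

end MeanValue

section LagrangianBounds

variable {V W : Type*} [NormedAddCommGroup V] [NormedSpace ℝ V] [NormedAddCommGroup W]
  [NormedSpace ℝ W] {U : Set V} {ℓ : ℝ} {q₁ q₂ v₁ v₂ : V}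

theorem norm_sub_le_of_quadratic_bound {g : V → V → W} {gqq gvq : V → V → (V →L[ℝ] W)}
    (hℓ : 0 ≤ ℓ) (hgqq : ∀ q ∈ U, ∀ v, HasFDerivAt (fun q' => g q' v) (gqq q v) q)
    (hgvq : ∀ q ∈ U, ∀ v, HasFDerivAt (fun v' => g q v') (gvq q v) v)
    (hbqq : ∀ q ∈ U, ∀ v, ‖gqq q v‖ ≤ ℓ * (1 + ‖v‖ ^ 2))
    (hbvq : ∀ q ∈ U, ∀ v, ‖gvq q v‖ ≤ ℓ * (1 + ‖v‖)) (hseg : segment ℝ q₂ q₁ ⊆ U) :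
    ‖g q₁ v₁ - g q₂ v₂‖
      ≤ ℓ * (1 + ‖v₁‖ + ‖v₂‖) * ((1 + ‖v₁‖ + ‖v₂‖) * ‖q₁ - q₂‖ + ‖v₁ - v₂‖) := by
  have hq₂ : q₂ ∈ U := hseg (left_mem_segment ℝ q₂ q₁)
  have h := norm_sub_le_of_partial_fderiv_le (f := g) (v₂ := v₂) (Mq := ℓ * (1 + ‖v₁‖ ^ 2))
    (Mv := ℓ * (1 + ‖v₁‖ + ‖v₂‖)) (fun q hq => hgqq q (hseg hq) v₁)
    (fun q hq => hbqq q (hseg hq) v₁) (fun v _ => hgvq q₂ hq₂ v)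
    (fun v hv => (hbvq q₂ hq₂ v).trans
      (mul_le_mul_of_nonneg_left (by linarith [norm_le_add_of_mem_segment hv]) hℓ))
  have hsq : 1 + ‖v₁‖ ^ 2 ≤ (1 + ‖v₁‖ + ‖v₂‖) * (1 + ‖v₁‖ + ‖v₂‖) := by
    nlinarith [norm_nonneg v₁, norm_nonneg v₂]
  calc ‖g q₁ v₁ - g q₂ v₂‖
      ≤ ℓ * (1 + ‖v₁‖ ^ 2) * ‖q₁ - q₂‖ + ℓ * (1 + ‖v₁‖ + ‖v₂‖) * ‖v₁ - v₂‖ := h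
    _ ≤ ℓ * ((1 + ‖v₁‖ + ‖v₂‖) * (1 + ‖v₁‖ + ‖v₂‖)) * ‖q₁ - q₂‖
          + ℓ * (1 + ‖v₁‖ + ‖v₂‖) * ‖v₁ - v₂‖ := by gcongr
    _ = _ := by ring

theorem norm_sub_le_of_linear_bound {g : V → V → W} {gqv gvv : V → V → (V →L[ℝ] W)}
    (hℓ : 0 ≤ ℓ) (hgqv : ∀ q ∈ U, ∀ v, HasFDerivAt (fun q' => g q' v) (gqv q v) q)
    (hgvv : ∀ q ∈ U, ∀ v, HasFDerivAt (fun v' => g q v') (gvv q v) v)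
    (hbqv : ∀ q ∈ U, ∀ v, ‖gqv q v‖ ≤ ℓ * (1 + ‖v‖))
    (hbvv : ∀ q ∈ U, ∀ v, ‖gvv q v‖ ≤ ℓ) (hseg : segment ℝ q₂ q₁ ⊆ U) :
    ‖g q₁ v₁ - g q₂ v₂‖ ≤ ℓ * ((1 + ‖v₁‖ + ‖v₂‖) * ‖q₁ - q₂‖ + ‖v₁ - v₂‖) := by
  have hq₂ : q₂ ∈ U := hseg (left_mem_segment ℝ q₂ q₁)
  have h := norm_sub_le_of_partial_fderiv_le (f := g) (v₂ := v₂) (Mq := ℓ * (1 + ‖v₁‖)) (Mv := ℓ)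
    (fun q hq => hgqv q (hseg hq) v₁) (fun q hq => hbqv q (hseg hq) v₁)
    (fun v _ => hgvv q₂ hq₂ v) (fun v _ => hbvv q₂ hq₂ v)
  calc ‖g q₁ v₁ - g q₂ v₂‖ ≤ ℓ * (1 + ‖v₁‖) * ‖q₁ - q₂‖ + ℓ * ‖v₁ - v₂‖ := h
    _ ≤ ℓ * (1 + ‖v₁‖ + ‖v₂‖) * ‖q₁ - q₂‖ + ℓ * ‖v₁ - v₂‖ := by
        gcongr ℓ * ?_ * _ + _; exact le_add_of_nonneg_right (norm_nonneg v₂)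
    _ = _ := by ring

end LagrangianBounds

theorem abs_pairing_sub_le {V : Type*} [NormedAddCommGroup V] [InnerProductSpace ℝ V]
    {U : Set V} {ℓ : ℝ} {Lq Lv : V → V → V} {Lvv Lqv Lvq Lqq : V → V → (V →L[ℝ] V)}
    (hℓ : 0 ≤ ℓ)
    (hLvv : ∀ q ∈ U, ∀ v, HasFDerivAt (fun v' => Lv q v') (Lvv q v) v)
    (hLqv : ∀ q ∈ U, ∀ v, HasFDerivAt (fun q' => Lv q' v) (Lqv q v) q)
    (hLvq : ∀ q ∈ U, ∀ v, HasFDerivAt (fun v' => Lq q v') (Lvq q v) v)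
    (hLqq : ∀ q ∈ U, ∀ v, HasFDerivAt (fun q' => Lq q' v) (Lqq q v) q)
    (hbd : ∀ q ∈ U, ∀ v, ‖Lvv q v‖ ≤ ℓ ∧ ‖Lqv q v‖ ≤ ℓ * (1 + ‖v‖) ∧ ‖Lvq q v‖ ≤ ℓ * (1 + ‖v‖)
      ∧ ‖Lqq q v‖ ≤ ℓ * (1 + ‖v‖ ^ 2))
    {q₁ q₂ v₁ v₂ x y : V} {K A : ℝ} (hseg : segment ℝ q₂ q₁ ⊆ U) (hK : ‖q₁ - q₂‖ ≤ K)
    (hA : ‖x‖ ≤ A) :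
    |(⟪Lq q₁ v₁, x⟫ + ⟪Lv q₁ v₁, y⟫) - (⟪Lq q₂ v₂, x⟫ + ⟪Lv q₂ v₂, y⟫)|
      ≤ ℓ * (((1 + ‖v₁‖ + ‖v₂‖) * K + ‖v₁ - v₂‖) * ((1 + ‖v₁‖ + ‖v₂‖) * A + ‖y‖)) := by
  set a := 1 + ‖v₁‖ + ‖v₂‖
  have ha : 0 ≤ a := by positivity
  have hK₀ : 0 ≤ K := (norm_nonneg _).trans hK
  have hq : ‖Lq q₁ v₁ - Lq q₂ v₂‖ ≤ ℓ * a * (a * K + ‖v₁ - v₂‖) :=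
    (norm_sub_le_of_quadratic_bound hℓ hLqq hLvq (fun q hq v => (hbd q hq v).2.2.2)
      (fun q hq v => (hbd q hq v).2.2.1) hseg).trans (by gcongr)
  have hv : ‖Lv q₁ v₁ - Lv q₂ v₂‖ ≤ ℓ * (a * K + ‖v₁ - v₂‖) :=
    (norm_sub_le_of_linear_bound hℓ hLqv hLvv (fun q hq v => (hbd q hq v).2.1)
      (fun q hq v => (hbd q hq v).1) hseg).trans (by gcongr)
  calc |(⟪Lq q₁ v₁, x⟫ + ⟪Lv q₁ v₁, y⟫) - (⟪Lq q₂ v₂, x⟫ + ⟪Lv q₂ v₂, y⟫)|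
      = |⟪Lq q₁ v₁ - Lq q₂ v₂, x⟫ + ⟪Lv q₁ v₁ - Lv q₂ v₂, y⟫| := by
        rw [inner_sub_left, inner_sub_left]; ring_nf
    _ ≤ ‖Lq q₁ v₁ - Lq q₂ v₂‖ * ‖x‖ + ‖Lv q₁ v₁ - Lv q₂ v₂‖ * ‖y‖ :=
        (abs_add_le _ _).trans (add_le_add (abs_real_inner_le_norm _ _)
          (abs_real_inner_le_norm _ _))
    _ ≤ ℓ * a * (a * K + ‖v₁ - v₂‖) * A + ℓ * (a * K + ‖v₁ - v₂‖) * ‖y‖ := by gcongr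
    _ = ℓ * ((a * K + ‖v₁ - v₂‖) * (a * A + ‖y‖)) := by ring

section PartialGradients

variable {V : Type*} [NormedAddCommGroup V] [InnerProductSpace ℝ V] [CompleteSpace V]
  {U : Set V} {L : ℝ → V → V → ℝ} {G : ℝ → V → V → V}

theorem continuousOn_gradQ_of_contDiffOn (hU : IsOpen U)
    (hL : ContDiffOn ℝ 1 (fun z : ℝ × V × V => L z.1 z.2.1 z.2.2) (univ ×ˢ U ×ˢ univ))
    (hG : ∀ t, ∀ q ∈ U, ∀ v, HasGradientAt (fun q' => L t q' v) (G t q v) q) :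
    ContinuousOn (fun z : ℝ × V × V => G z.1 z.2.1 z.2.2) (univ ×ˢ U ×ˢ univ) :=
  continuousOn_of_hasGradientAt_slice (isOpen_univ.prod (hU.prod isOpen_univ)) hL
    (slice := fun z q => (z.1, q, z.2.2)) (fun _ => rfl)
    (fun z => (hasFDerivAt_const z.1 _).prodMk
      ((hasFDerivAt_id _).prodMk (hasFDerivAt_const z.2.2 _)))
    (fun z hz => hG z.1 z.2.1 hz.2.1 z.2.2)

theorem continuousOn_gradV_of_contDiffOn (hU : IsOpen U)
    (hL : ContDiffOn ℝ 1 (fun z : ℝ × V × V => L z.1 z.2.1 z.2.2) (univ ×ˢ U ×ˢ univ))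
    (hG : ∀ t, ∀ q ∈ U, ∀ v, HasGradientAt (fun v' => L t q v') (G t q v) v) :
    ContinuousOn (fun z : ℝ × V × V => G z.1 z.2.1 z.2.2) (univ ×ˢ U ×ˢ univ) :=
  continuousOn_of_hasGradientAt_slice (isOpen_univ.prod (hU.prod isOpen_univ)) hL
    (slice := fun z v => (z.1, z.2.1, v)) (fun _ => rfl)
    (fun z => (hasFDerivAt_const z.1 _).prodMk
      ((hasFDerivAt_const z.2.1 _).prodMk (hasFDerivAt_id _)))
    (fun z hz => hG z.1 z.2.1 hz.2.1 z.2.2)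

end PartialGradients

instance : IsProbabilityMeasure μ01 :=
  ⟨by rw [Measure.restrict_apply_univ]; simp [Real.volume_Icc]⟩

section Path

variable {n : ℕ}

theorem pathH_sub (p q : Hsp n) {t : ℝ} (ht : t ∈ Icc (0 : ℝ) 1) :
    pathH (p - q) t = pathH p t - pathH q t := by
  rw [eq_sub_iff_add_eq, ← pathH_add _ _ _ ht, sub_add_cancel]

theorem norm_pathH_le (p : Hsp n) (t : ℝ) : ‖pathH p t‖ ≤ 2 * ‖p‖ := by
  have hint : ‖∫ s in Ioc (0 : ℝ) t, p.2 s ∂μ01‖ ≤ ‖p.2‖ :=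
    calc ‖∫ s in Ioc (0 : ℝ) t, p.2 s ∂μ01‖ ≤ ∫ s in Ioc (0 : ℝ) t, ‖p.2 s‖ ∂μ01 :=
          norm_integral_le_integral_norm _
      _ ≤ ∫ s, ‖p.2 s‖ ∂μ01 :=
          setIntegral_le_integral ((Lp.memLp p.2).integrable one_le_two).norm
            (Eventually.of_forall fun _ => norm_nonneg _)
      _ ≤ ‖p.2‖ := Lp.integral_norm_le_norm p.2
  calc ‖pathH p t‖ ≤ ‖p.1‖ + ‖p.2‖ := (norm_add_le _ _).trans (by gcongr)
    _ ≤ 2 * ‖p‖ := by linarith [norm_fst_le p, norm_snd_le p]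

theorem aestronglyMeasurable_pathH (p : Hsp n) : AEStronglyMeasurable (pathH p) μ01 := by
  have hcont : Continuous fun t => p.1 + ∫ s in (0 : ℝ)..t, p.2 s ∂μ01 :=
    continuous_const.add (((Lp.memLp p.2).integrable one_le_two).continuous_primitive 0)
  refine hcont.aestronglyMeasurable.congr ?_
  filter_upwards [ae_restrict_mem measurableSet_Icc] with t ht
  rw [pathH, intervalIntegral.integral_of_le ht.1]

theorem segment_pathH_subset {U : Set (E n)} {B : Set (Hsp n)} (hB : Convex ℝ B)
    (hBO : B ⊆ actO U) {γ₁ γ₂ : Hsp n} (h₁ : γ₁ ∈ B) (h₂ : γ₂ ∈ B) {t : ℝ}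
    (ht : t ∈ Icc (0 : ℝ) 1) : segment ℝ (pathH γ₂ t) (pathH γ₁ t) ⊆ U := by
  rintro _ ⟨a, b, ha, hb, hab, rfl⟩
  have h := hBO (hB h₂ h₁ ha hb hab) t ht
  rwa [pathH_add _ _ _ ht, pathH_smul _ _ _ ht, pathH_smul _ _ _ ht] at h

end Path

section Action

variable {n : ℕ}

theorem aestronglyMeasurable_comp_pathH {U : Set (E n)} (hU : IsOpen U)
    {G : ℝ → E n → E n → E n}
    (hG : ContinuousOn (fun z : ℝ × E n × E n => G z.1 z.2.1 z.2.2) (univ ×ˢ U ×ˢ univ))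
    {γ : Hsp n} (hγ : γ ∈ actO U) :
    AEStronglyMeasurable (fun t => G t (pathH γ t) (γ.2 t)) μ01 :=
  hG.aestronglyMeasurable_comp (f := fun t => (t, pathH γ t, γ.2 t))
    (isOpen_univ.prod (hU.prod isOpen_univ))
    (aemeasurable_id.prodMk ((aestronglyMeasurable_pathH γ).aemeasurable.prodMk
      (Lp.aestronglyMeasurable γ.2).aemeasurable))
    (by filter_upwards [ae_restrict_mem measurableSet_Icc] with t ht
        exact ⟨trivial, hγ t ht, trivial⟩)

noncomputable def speedWeight (γ₁ γ₂ : Hsp n) : Lp ℝ 2 μ01 :=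
  Lp.const 2 μ01 1 + Lp.pointwiseNorm γ₁.2 + Lp.pointwiseNorm γ₂.2

theorem coeFn_speedWeight (γ₁ γ₂ : Hsp n) :
    speedWeight γ₁ γ₂ =ᵐ[μ01] fun t => 1 + ‖γ₁.2 t‖ + ‖γ₂.2 t‖ := by
  filter_upwards
    [Lp.coeFn_add (Lp.const 2 μ01 1 + Lp.pointwiseNorm γ₁.2) (Lp.pointwiseNorm γ₂.2),
    Lp.coeFn_add (Lp.const 2 μ01 (1 : ℝ)) (Lp.pointwiseNorm γ₁.2), Lp.coeFn_const 2 μ01 (1 : ℝ),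
    Lp.coeFn_pointwiseNorm γ₁.2, Lp.coeFn_pointwiseNorm γ₂.2] with t h h' h₀ h₁ h₂
  simp only [speedWeight, h, Pi.add_apply, h', h₀, h₁, h₂, Function.const_apply]

theorem norm_speedWeight_le (γ₁ γ₂ : Hsp n) : ‖speedWeight γ₁ γ₂‖ ≤ 1 + ‖γ₁‖ + ‖γ₂‖ := by
  have h₀ : ‖Lp.const 2 μ01 (1 : ℝ)‖ = 1 := by simp [Lp.norm_const]
  calc ‖speedWeight γ₁ γ₂‖ ≤ 1 + ‖γ₁.2‖ + ‖γ₂.2‖ := by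
        simpa [speedWeight, h₀] using norm_add₃_le (a := Lp.const 2 μ01 (1 : ℝ))
          (b := Lp.pointwiseNorm γ₁.2) (c := Lp.pointwiseNorm γ₂.2)
    _ ≤ 1 + ‖γ₁‖ + ‖γ₂‖ := by gcongr <;> exact norm_snd_le _

noncomputable def majorant (a : Lp ℝ 2 μ01) (p : Hsp n) : Lp ℝ 2 μ01 :=
  (2 * ‖p‖) • a + Lp.pointwiseNorm p.2

theorem coeFn_majorant (a : Lp ℝ 2 μ01) (p : Hsp n) :
    majorant a p =ᵐ[μ01] fun t => a t * (2 * ‖p‖) + ‖p.2 t‖ := by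
  filter_upwards [Lp.coeFn_add ((2 * ‖p‖) • a) (Lp.pointwiseNorm p.2),
    Lp.coeFn_smul (2 * ‖p‖) a, Lp.coeFn_pointwiseNorm p.2] with t h h₁ h₂
  rw [majorant, h, Pi.add_apply, h₁, h₂, Pi.smul_apply, smul_eq_mul, mul_comm]

theorem norm_majorant_le (a : Lp ℝ 2 μ01) (p : Hsp n) :
    ‖majorant a p‖ ≤ (2 * ‖a‖ + 1) * ‖p‖ :=
  calc ‖majorant a p‖ ≤ 2 * ‖p‖ * ‖a‖ + ‖p.2‖ := by
        simpa [majorant, norm_smul] using norm_add_le ((2 * ‖p‖) • a) (Lp.pointwiseNorm p.2)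
    _ ≤ (2 * ‖a‖ + 1) * ‖p‖ := by nlinarith [norm_snd_le p]

theorem abs_dAct_sub_le {U : Set (E n)} (hU : IsOpen U)
    {Lq Lv : ℝ → E n → E n → E n} {Lvv Lqv Lvq Lqq : ℝ → E n → E n → (E n →L[ℝ] E n)}
    (hLqc : ContinuousOn (fun z : ℝ × E n × E n => Lq z.1 z.2.1 z.2.2) (univ ×ˢ U ×ˢ univ))
    (hLvc : ContinuousOn (fun z : ℝ × E n × E n => Lv z.1 z.2.1 z.2.2) (univ ×ˢ U ×ˢ univ))
    (hLvv : ∀ (t : ℝ), ∀ q ∈ U, ∀ v : E n, HasFDerivAt (fun v' => Lv t q v') (Lvv t q v) v)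
    (hLqv : ∀ (t : ℝ), ∀ q ∈ U, ∀ v : E n, HasFDerivAt (fun q' => Lv t q' v) (Lqv t q v) q)
    (hLvq : ∀ (t : ℝ), ∀ q ∈ U, ∀ v : E n, HasFDerivAt (fun v' => Lq t q v') (Lvq t q v) v)
    (hLqq : ∀ (t : ℝ), ∀ q ∈ U, ∀ v : E n, HasFDerivAt (fun q' => Lq t q' v) (Lqq t q v) q)
    {ℓ : ℝ} (hℓ : 0 ≤ ℓ)
    (hbd : ∀ t ∈ Icc (0:ℝ) 1, ∀ q ∈ U, ∀ v : E n,
      ‖Lvv t q v‖ ≤ ℓ ∧ ‖Lqv t q v‖ ≤ ℓ * (1 + ‖v‖) ∧ ‖Lvq t q v‖ ≤ ℓ * (1 + ‖v‖)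
        ∧ ‖Lqq t q v‖ ≤ ℓ * (1 + ‖v‖ ^ 2))
    {γ₁ γ₂ : Hsp n} (h₁ : γ₁ ∈ actO U) (h₂ : γ₂ ∈ actO U)
    (hseg : ∀ t ∈ Icc (0:ℝ) 1, segment ℝ (pathH γ₂ t) (pathH γ₁ t) ⊆ U) (ξ : Hsp n) :
    |dAct Lq Lv γ₁ ξ - dAct Lq Lv γ₂ ξ|
      ≤ ℓ * (‖majorant (speedWeight γ₁ γ₂) (γ₁ - γ₂)‖ * ‖majorant (speedWeight γ₁ γ₂) ξ‖) := by
  have hmeas : ∀ γ ∈ actO U, AEStronglyMeasurable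
      (fun t => ⟪Lq t (pathH γ t) (γ.2 t), pathH ξ t⟫ + ⟪Lv t (pathH γ t) (γ.2 t), ξ.2 t⟫) μ01 :=
    fun γ hγ => ((aestronglyMeasurable_comp_pathH hU hLqc hγ).inner
      (aestronglyMeasurable_pathH ξ)).add
      ((aestronglyMeasurable_comp_pathH hU hLvc hγ).inner (Lp.aestronglyMeasurable ξ.2))
  set a := speedWeight γ₁ γ₂
  refine (abs_integral_sub_le_of_abs_sub_le (hmeas γ₁ h₁) (hmeas γ₂ h₂)
    ((Lp.integrable_mul (majorant a (γ₁ - γ₂)) (majorant a ξ)).const_mul ℓ) ?_).trans ?_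
  · filter_upwards [ae_restrict_mem measurableSet_Icc, coeFn_speedWeight γ₁ γ₂,
      coeFn_majorant a (γ₁ - γ₂), coeFn_majorant a ξ, Lp.coeFn_sub γ₁.2 γ₂.2]
      with t ht ha hδ hξ hsub
    have hK : ‖pathH γ₁ t - pathH γ₂ t‖ ≤ 2 * ‖γ₁ - γ₂‖ :=
      pathH_sub γ₁ γ₂ ht ▸ norm_pathH_le (γ₁ - γ₂) t
    rw [hδ, hξ, ha, Prod.snd_sub, hsub, Pi.sub_apply]
    exact abs_pairing_sub_le hℓ (hLvv t) (hLqv t) (hLvq t) (hLqq t) (hbd t ht) (hseg t ht) hK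
      (norm_pathH_le ξ t)
  · rw [integral_const_mul]
    exact mul_le_mul_of_nonneg_left (Lp.integral_mul_le_norm_mul_norm _ _) hℓ

end Action

/-- The Fréchet differential `DS_L` is Lipschitz continuous on every bounded
convex subset of `𝒪`. -/
theorem dAction_lipschitzOn_bounded_convex
    {n : ℕ} (U : Set (E n)) (hU : IsOpen U)
    (L : ℝ → E n → E n → ℝ)
    (Lq Lv : ℝ → E n → E n → E n)
    (Lvv Lqv Lvq Lqq : ℝ → E n → E n → (E n →L[ℝ] E n))
    (hL : ContDiffOn ℝ ∞ (fun z : ℝ × E n × E n => L z.1 z.2.1 z.2.2)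
      (Set.univ ×ˢ U ×ˢ Set.univ))
    (hLq : ∀ (t : ℝ), ∀ q ∈ U, ∀ v : E n, HasGradientAt (fun q' => L t q' v) (Lq t q v) q)
    (hLv : ∀ (t : ℝ), ∀ q ∈ U, ∀ v : E n, HasGradientAt (fun v' => L t q v') (Lv t q v) v)
    (hLvv : ∀ (t : ℝ), ∀ q ∈ U, ∀ v : E n, HasFDerivAt (fun v' => Lv t q v') (Lvv t q v) v)
    (hLqv : ∀ (t : ℝ), ∀ q ∈ U, ∀ v : E n, HasFDerivAt (fun q' => Lv t q' v) (Lqv t q v) q)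
    (hLvq : ∀ (t : ℝ), ∀ q ∈ U, ∀ v : E n, HasFDerivAt (fun v' => Lq t q v') (Lvq t q v) v)
    (hLqq : ∀ (t : ℝ), ∀ q ∈ U, ∀ v : E n, HasFDerivAt (fun q' => Lq t q' v) (Lqq t q v) q)
    (ℓ₁ : ℝ) (hℓ₁ : 0 < ℓ₁)
    (hL1 : ∀ t ∈ Set.Icc (0:ℝ) 1, ∀ q ∈ U, ∀ v : E n,
      ‖Lvv t q v‖ ≤ ℓ₁ ∧ ‖Lqv t q v‖ ≤ ℓ₁ * (1 + ‖v‖) ∧ ‖Lvq t q v‖ ≤ ℓ₁ * (1 + ‖v‖)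
        ∧ ‖Lqq t q v‖ ≤ ℓ₁ * (1 + ‖v‖ ^ 2))
    (D : Hsp n → (Hsp n →L[ℝ] ℝ))
    (hD : ∀ p ∈ actO U, ∀ ξ : Hsp n, D p ξ = dAct Lq Lv p ξ)
    (B : Set (Hsp n)) (hBO : B ⊆ actO U) (hBconv : Convex ℝ B)
    (hBbdd : Bornology.IsBounded B) :
    ∃ C : ℝ, 0 ≤ C ∧ ∀ γ₁ ∈ B, ∀ γ₂ ∈ B, ‖D γ₁ - D γ₂‖ ≤ C * ‖γ₁ - γ₂‖ := by
  obtain ⟨R, hR₀, hR⟩ := hBbdd.exists_pos_norm_le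
  have hL₁ : ContDiffOn ℝ 1 (fun z : ℝ × E n × E n => L z.1 z.2.1 z.2.2) (univ ×ˢ U ×ˢ univ) :=
    hL.of_le (by simp)
  have hLqc := continuousOn_gradQ_of_contDiffOn hU hL₁ hLq
  have hLvc := continuousOn_gradV_of_contDiffOn hU hL₁ hLv
  refine ⟨ℓ₁ * (3 + 4 * R) ^ 2, by positivity, fun γ₁ h₁ γ₂ h₂ => ?_⟩
  have ha : 2 * ‖speedWeight γ₁ γ₂‖ + 1 ≤ 3 + 4 * R := by
    linarith [norm_speedWeight_le γ₁ γ₂, hR γ₁ h₁, hR γ₂ h₂]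
  refine ContinuousLinearMap.opNorm_le_bound _ (by positivity) fun ξ => ?_
  rw [sub_apply, hD γ₁ (hBO h₁), hD γ₂ (hBO h₂), Real.norm_eq_abs]
  calc _ ≤ ℓ₁ * (‖majorant (speedWeight γ₁ γ₂) (γ₁ - γ₂)‖ * ‖majorant (speedWeight γ₁ γ₂) ξ‖) :=
        abs_dAct_sub_le hU hLqc hLvc hLvv hLqv hLvq hLqq hℓ₁.le hL1 (hBO h₁) (hBO h₂)
          (fun t ht => segment_pathH_subset hBconv hBO h₁ h₂ ht) ξ
    _ ≤ ℓ₁ * (((3 + 4 * R) * ‖γ₁ - γ₂‖) * ((3 + 4 * R) * ‖ξ‖)) := by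
        gcongr <;> exact (norm_majorant_le _ _).trans (by gcongr)
    _ = ℓ₁ * (3 + 4 * R) ^ 2 * ‖γ₁ - γ₂‖ * ‖ξ‖ := by ring
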